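/- arXiv:2205.00336 — 3 statements merged into one kernel-verified Lean document; each statement's English description precedes it below -/
import Mathlib

section
/- Let $x_1 < \dots < x_n$ be real numbers and let $d:\mathbb{R}\to\mathbb{R}$ be absolutely continuous with derivative $d'$ of total variation $TV(d') < 2(n-1)$. Then there exists an index $i \in \{1,\dots,n\}$ such that either $d(x_i) \neq x_i$ or $d'(x_i) \geq 0$. -/
open MeasureTheory ENNReal

/-- If the integral of `d'` over `[a,b]` equals `b - a`, then `d' t ≥ 1` somewhere on `[a,b]`. -/
lemma stmt0_aux_exists_ge_one (d d' : ℝ → ℝ) {a b : ℝ} (hab : a < b)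
    (hi : d b - d a = ∫ t in a..b, d' t) (hfix : d b - d a = b - a) :
    ∃ t ∈ Set.Icc a b, 1 ≤ d' t := by
  by_contra h
  push_neg at h
  by_cases hint : IntervalIntegrable d' volume a b
  · have hpos : 0 < ∫ t in a..b, (1 - d' t) := by
      apply intervalIntegral.intervalIntegral_pos_of_pos_on
        (intervalIntegrable_const.sub hint) _ hab
      intro t ht
      have := h t ⟨ht.1.le, ht.2.le⟩
      linarith
    have : (∫ t in a..b, (1 - d' t)) = (b - a) - ∫ t in a..b, d' t := by
      rw [intervalIntegral.integral_sub intervalIntegrable_const hint,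
        intervalIntegral.integral_const]
      simp
    rw [this, ← hi, hfix] at hpos
    linarith
  · rw [intervalIntegral.integral_undef hint] at hi
    linarith

/-- If `d'` is negative at both endpoints, but its integral over `[a,b]` equals `b - a`,
then the variation of `d'` over `[a,b]` is at least `2`. -/
lemma stmt0_aux_two_le (d d' : ℝ → ℝ) {a b : ℝ} (hab : a < b)
    (hi : d b - d a = ∫ t in a..b, d' t) (hfix : d b - d a = b - a)
    (hda : d' a < 0) (hdb : d' b < 0) :
    (2 : ℝ≥0∞) ≤ eVariationOn d' (Set.Icc a b) := by
  obtain ⟨t, ht, hdt⟩ := stmt0_aux_exists_ge_one d d' hab hi hfix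
  set u : ℕ → ℝ := fun k => if k = 0 then a else if k = 1 then t else b with hu
  have hmono : Monotone u := by
    apply monotone_nat_of_le_succ
    intro k
    rcases k with _ | _ | k <;> simp [hu, ht.1, ht.2]
  have hmem : ∀ k, u k ∈ Set.Icc a b := by
    intro k
    rcases k with _ | _ | k <;>
      simp [hu, ht.1, ht.2, le_of_lt hab]
  have key := eVariationOn.sum_le (f := d') (n := 2) hmono hmem
  have hsum : ∑ i ∈ Finset.range 2, edist (d' (u (i + 1))) (d' (u i)) =
      edist (d' t) (d' a) + edist (d' b) (d' t) := by
    rw [Finset.sum_range_succ, Finset.sum_range_one]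
    simp [hu]
  have h1 : (1 : ℝ≥0∞) ≤ edist (d' t) (d' a) := by
    rw [edist_dist, Real.dist_eq]
    rw [show (1 : ℝ≥0∞) = ENNReal.ofReal 1 by simp]
    apply ENNReal.ofReal_le_ofReal
    have : (1 : ℝ) ≤ d' t - d' a := by linarith
    exact this.trans (le_abs_self _)
  have h2 : (1 : ℝ≥0∞) ≤ edist (d' b) (d' t) := by
    rw [edist_dist, Real.dist_eq]
    rw [show (1 : ℝ≥0∞) = ENNReal.ofReal 1 by simp]
    apply ENNReal.ofReal_le_ofReal
    have : (1 : ℝ) ≤ d' t - d' b := by linarith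
    calc (1 : ℝ) ≤ d' t - d' b := this
      _ ≤ |d' t - d' b| := le_abs_self _
      _ = |d' b - d' t| := abs_sub_comm _ _
  calc (2 : ℝ≥0∞) = 1 + 1 := by norm_num
    _ ≤ edist (d' t) (d' a) + edist (d' b) (d' t) := add_le_add h1 h2
    _ = ∑ i ∈ Finset.range 2, edist (d' (u (i + 1))) (d' (u i)) := hsum.symm
    _ ≤ eVariationOn d' (Set.Icc a b) := key

/-- If `x 0 < ... < x (n-1)` and `d : ℝ → ℝ` is absolutely continuous with derivative `d'`
whose total variation satisfies `TV(d') < 2(n-1)`, then there exists an index `i` such that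
either `d (x i) ≠ x i` or `d' (x i) ≥ 0`. -/
theorem stmt0 (n : ℕ) (x : Fin n → ℝ) (hx : StrictMono x)
    (d d' : ℝ → ℝ)
    (hac : ∀ a b : ℝ, a < b → d b - d a = ∫ t in a..b, d' t)
    (hTV : eVariationOn d' Set.univ < ENNReal.ofReal (2 * (n - 1 : ℝ))) :
    ∃ i : Fin n, d (x i) ≠ x i ∨ 0 ≤ d' (x i) := by
  by_contra hcon
  push_neg at hcon
  rcases n with _ | _ | m
  · rw [ENNReal.ofReal_of_nonpos (by norm_num)] at hTV
    exact absurd hTV (by simp)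
  · rw [ENNReal.ofReal_of_nonpos (by norm_num)] at hTV
    exact absurd hTV (by simp)
  -- now n = m + 2
  set X : ℕ → ℝ := fun k => x ⟨min k (m + 1), by omega⟩ with hX
  have hXeq : ∀ k (hk : k ≤ m + 1), X k = x ⟨k, by omega⟩ := by
    intro k hk
    simp [hX, Nat.min_eq_left hk]
  have hXlt : ∀ k, k < m + 1 → X k < X (k + 1) := by
    intro k hk
    rw [hXeq k (by omega), hXeq (k + 1) (by omega)]
    exact hx (by simp [Fin.lt_def])
  have hXmono : Monotone X := by
    intro i j hij
    exact hx.monotone (by simp [Fin.le_def]; omega)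
  have hfix : ∀ k (hk : k ≤ m + 1), d (X k) = X k ∧ d' (X k) < 0 := by
    intro k hk
    rw [hXeq k hk]
    exact hcon ⟨k, by omega⟩
  have main : ∀ j, j ≤ m + 1 →
      ((2 * j : ℕ) : ℝ≥0∞) ≤ eVariationOn d' (Set.univ ∩ Set.Icc (X 0) (X j)) := by
    intro j
    induction j with
    | zero => simp
    | succ j ih =>
      intro hj
      have ihj := ih (by omega)
      have hlt : X j < X (j + 1) := hXlt j (by omega)
      have hfj := hfix j (by omega)
      have hfj1 := hfix (j + 1) (by omega)
      have key : (2 : ℝ≥0∞) ≤ eVariationOn d' (Set.Icc (X j) (X (j + 1))) := by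
        apply stmt0_aux_two_le d d' hlt (hac _ _ hlt) _ hfj.2 hfj1.2
        rw [hfj.1, hfj1.1]
      have hsplit := eVariationOn.Icc_add_Icc d' (s := Set.univ)
        (hXmono (Nat.zero_le j)) hlt.le (Set.mem_univ (X j))
      have : ((2 * (j + 1) : ℕ) : ℝ≥0∞) = ((2 * j : ℕ) : ℝ≥0∞) + 2 := by
        push_cast; ring
      rw [this, ← hsplit]
      apply add_le_add ihj
      rw [Set.univ_inter]
      exact key
  have final := (main (m + 1) le_rfl).trans
    (eVariationOn.mono d' (Set.subset_univ _))
  have hcast : ENNReal.ofReal (2 * ((m + 2 : ℕ) - 1 : ℝ)) = ((2 * (m + 1) : ℕ) : ℝ≥0∞) := by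
    rw [show (2 * ((m + 2 : ℕ) - 1 : ℝ)) = ((2 * (m + 1) : ℕ) : ℝ) by push_cast; ring,
      ENNReal.ofReal_natCast]
  rw [hcast] at hTV
  exact absurd (final.trans_lt hTV) (lt_irrefl _)
end

section
/- Let $\theta_1,\dots,\theta_n \in \mathbb{R}$, $\sigma>0$, and define the weights $w_i(x) = \frac{\phi((x-\theta_i)/\sigma)}{\sum_{j=1}^n \phi((x-\theta_j)/\sigma)}$ and $d^*(x) = \sum_{i=1}^n w_i(x)\theta_i$. Then $d^*$ is differentiable with $\frac{d}{dx} d^*(x) = \sigma^{-2} \sum_{i=1}^n w_i(x)\left(\theta_i - \sum_{j=1}^n w_j(x)\theta_j\right)^2$. -/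
open Real Finset

lemma stmt3_key (n : ℕ) (g θ' : Fin n → ℝ) (hg : ∀ i, 0 < g i) (hn : 0 < n)
    (σ x : ℝ) (hσ : σ ≠ 0) :
    (σ ^ 2)⁻¹ * ∑ i, g i / (∑ j, g j) * (θ' i - ∑ j, g j / (∑ j', g j') * θ' j) ^ 2
      = ((∑ i, (θ' i - x) / σ ^ 2 * g i * θ' i) * (∑ j, g j)
          - (∑ i, g i * θ' i) * (∑ i, (θ' i - x) / σ ^ 2 * g i)) / (∑ j, g j) ^ 2 := by
  have hS : 0 < ∑ j, g j := Finset.sum_pos (fun i _ => hg i) (by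
    simpa [Finset.univ_nonempty_iff] using Fin.pos_iff_nonempty.mp hn)
  set S := ∑ j, g j with hSdef
  set N := ∑ i, g i * θ' i with hNdef
  set Q := ∑ i, g i * θ' i ^ 2 with hQdef
  have hm : ∑ j, g j / S * θ' j = N / S := by
    rw [hNdef, Finset.sum_div]
    exact Finset.sum_congr rfl fun j _ => (div_mul_eq_mul_div _ _ _)
  have hN' : ∑ i, (θ' i - x) / σ ^ 2 * g i * θ' i
      = (σ ^ 2)⁻¹ * Q - (σ ^ 2)⁻¹ * x * N := by
    rw [hQdef, hNdef, Finset.mul_sum, Finset.mul_sum, ← Finset.sum_sub_distrib]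
    exact Finset.sum_congr rfl fun i _ => by rw [div_eq_mul_inv]; ring
  have hS' : ∑ i, (θ' i - x) / σ ^ 2 * g i = (σ ^ 2)⁻¹ * N - (σ ^ 2)⁻¹ * x * S := by
    rw [hSdef, hNdef, Finset.mul_sum, Finset.mul_sum, ← Finset.sum_sub_distrib]
    exact Finset.sum_congr rfl fun i _ => by rw [div_eq_mul_inv]; ring
  have hL : ∑ i, g i / S * (θ' i - N / S) ^ 2
      = S⁻¹ * Q - S⁻¹ * 2 * (N / S) * N + S⁻¹ * (N / S) ^ 2 * S := by
    rw [hQdef, hNdef, Finset.mul_sum, Finset.mul_sum, Finset.mul_sum,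
      ← Finset.sum_sub_distrib, ← Finset.sum_add_distrib]
    refine Finset.sum_congr rfl fun i _ => ?_
    rw [div_eq_mul_inv]; ring
  rw [hm, hN', hS', hL]
  have hS0 : S ≠ 0 := ne_of_gt hS
  have hσ2 : (σ:ℝ) ^ 2 ≠ 0 := pow_ne_zero _ hσ
  field_simp
  ring

/-- The derivative of the oracle separable estimator is `σ⁻²` times the posterior variance. -/
theorem stmt3 (n : ℕ) (θ : Fin n → ℝ) (σ : ℝ) (hσ : 0 < σ)
    (φ : ℝ → ℝ) (hφ : φ = fun t => (Real.sqrt (2 * π))⁻¹ * Real.exp (-t ^ 2 / 2))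
    (w : Fin n → ℝ → ℝ)
    (hw : w = fun i x => φ ((x - θ i) / σ) / (∑ j, φ ((x - θ j) / σ)))
    (dstar : ℝ → ℝ) (hd : dstar = fun x => ∑ i, w i x * θ i) :
    ∀ x : ℝ, HasDerivAt dstar
      ((σ ^ 2)⁻¹ * ∑ i, w i x * (θ i - ∑ j, w j x * θ j) ^ 2) x := by
  intro x
  subst hd hw
  rcases Nat.eq_zero_or_pos n with hn | hn
  · subst hn
    simpa using hasDerivAt_const x (0:ℝ)
  have hφpos : ∀ t, 0 < φ t := by
    intro t; rw [hφ]
    have h2π : (0:ℝ) < 2 * π := by positivity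
    positivity
  have hσ0 : σ ≠ 0 := ne_of_gt hσ
  have hderiv_g : ∀ i : Fin n, HasDerivAt (fun y => φ ((y - θ i) / σ))
      ((θ i - x) / σ ^ 2 * φ ((x - θ i) / σ)) x := by
    intro i
    have h1 : HasDerivAt (fun y => (y - θ i) / σ) (1 / σ) x :=
      ((hasDerivAt_id x).sub_const _).div_const σ
    set u := (x - θ i) / σ with hu
    have h2 : HasDerivAt (fun t : ℝ => -t ^ 2 / 2) (-u) u := by
      have := ((hasDerivAt_pow 2 u).neg).div_const 2
      exact this.congr_deriv (by norm_num; ring)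
    have h3 : HasDerivAt (fun t : ℝ => (Real.sqrt (2 * π))⁻¹ * Real.exp (-t ^ 2 / 2))
        ((Real.sqrt (2 * π))⁻¹ * (Real.exp (-u ^ 2 / 2) * (-u))) u := (h2.exp).const_mul _
    have h4 := h3.comp x h1
    rw [hφ]
    refine h4.congr_deriv ?_
    rw [hu]
    field_simp
    ring
  have hSpos : ∀ y : ℝ, 0 < ∑ j, φ ((y - θ j) / σ) := fun y =>
    Finset.sum_pos (fun j _ => hφpos _) (by
      simpa [Finset.univ_nonempty_iff] using Fin.pos_iff_nonempty.mp hn)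
  have hN : HasDerivAt (fun y => ∑ i, φ ((y - θ i) / σ) * θ i)
      (∑ i, (θ i - x) / σ ^ 2 * φ ((x - θ i) / σ) * θ i) x :=
    HasDerivAt.fun_sum fun i _ => (hderiv_g i).mul_const (θ i)
  have hS : HasDerivAt (fun y => ∑ j, φ ((y - θ j) / σ))
      (∑ i, (θ i - x) / σ ^ 2 * φ ((x - θ i) / σ)) x :=
    HasDerivAt.fun_sum fun i _ => hderiv_g i
  have hD := hN.div hS (ne_of_gt (hSpos x))
  have hds : (fun y => ∑ i, φ ((y - θ i) / σ) / (∑ j, φ ((y - θ j) / σ)) * θ i)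
      = fun y => (∑ i, φ ((y - θ i) / σ) * θ i) / ∑ j, φ ((y - θ j) / σ) := by
    funext y
    rw [Finset.sum_div]
    exact Finset.sum_congr rfl fun i _ => (div_mul_eq_mul_div _ _ _)
  rw [hds]
  refine hD.congr_deriv ?_
  exact (stmt3_key n (fun i => φ ((x - θ i) / σ)) θ (fun i => hφpos _) hn σ x hσ0).symm
end

section
/- Let $\theta_1,\dots,\theta_n \in \mathbb{R}$, $\sigma>0$, $w_i(x) = \frac{\phi((x-\theta_i)/\sigma)}{\sum_{j=1}^n \phi((x-\theta_j)/\sigma)}$, and $d^*(x) = \sum_{i=1}^n w_i(x)\theta_i$. Then $d^*$ is monotone nondecreasing and for all $x$, $0 \leq (d^*)'(x) \leq \sigma^{-2} r(\theta)^2$, where $r(\theta) = \max_i \theta_i - \min_i \theta_i$. -/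
open Real Finset

/-- The oracle separable estimator is monotone nondecreasing with derivative bounded by
`σ⁻² r(θ)²`, where `r(θ)` is the range of the means. -/
theorem stmt4 (n : ℕ) (hn : 0 < n) (θ : Fin n → ℝ) (σ : ℝ) (hσ : 0 < σ)
    (φ : ℝ → ℝ) (hφ : φ = fun t => (Real.sqrt (2 * π))⁻¹ * Real.exp (-t ^ 2 / 2))
    (w : Fin n → ℝ → ℝ)
    (hw : w = fun i x => φ ((x - θ i) / σ) / (∑ j, φ ((x - θ j) / σ)))
    (dstar : ℝ → ℝ) (hd : dstar = fun x => ∑ i, w i x * θ i)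
    (r : ℝ)
    (hr : r = Finset.univ.sup' (Finset.univ_nonempty_iff.mpr (Fin.pos_iff_nonempty.mp hn)) θ
        - Finset.univ.inf' (Finset.univ_nonempty_iff.mpr (Fin.pos_iff_nonempty.mp hn)) θ) :
    Monotone dstar ∧
      ∀ x : ℝ, 0 ≤ deriv dstar x ∧ deriv dstar x ≤ (σ ^ 2)⁻¹ * r ^ 2 := by
  have hne : (Finset.univ : Finset (Fin n)).Nonempty :=
    Finset.univ_nonempty_iff.mpr (Fin.pos_iff_nonempty.mp hn)
  have hσ2 : (0:ℝ) < σ ^ 2 := by positivity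
  set g : Fin n → ℝ → ℝ := fun i x => φ ((x - θ i) / σ) with hg
  have hgpos : ∀ i x, 0 < g i x := by
    intro i x; simp only [hg, hφ]; positivity
  set S : ℝ → ℝ := fun x => ∑ j, g j x with hS
  have hSpos : ∀ x, 0 < S x := fun x => Finset.sum_pos (fun i _ => hgpos i x) hne
  set N : ℝ → ℝ := fun x => ∑ i, g i x * θ i with hN
  have hdN : dstar = fun x => N x / S x := by
    funext x
    simp only [hd, hw, hN, hS, hg, div_mul_eq_mul_div, ← Finset.sum_div]
  -- derivatives
  have hgd : ∀ i x, HasDerivAt (g i) (-((x - θ i) / σ ^ 2) * g i x) x := by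
    intro i x
    have h1 : HasDerivAt (fun y : ℝ => (y - θ i) / σ) (1 / σ) x := by
      simpa using ((hasDerivAt_id x).sub_const (θ i)).div_const σ
    have h0 : HasDerivAt (fun u : ℝ => -u ^ 2 / 2) (-((x - θ i) / σ)) ((x - θ i) / σ) := by
      have := (hasDerivAt_pow 2 ((x - θ i) / σ)).neg.div_const 2
      exact this.congr_deriv (by norm_num; ring)
    have h2 : HasDerivAt (fun u : ℝ => (Real.sqrt (2 * π))⁻¹ * Real.exp (-u ^ 2 / 2))
        ((Real.sqrt (2 * π))⁻¹ * (Real.exp (-((x - θ i) / σ) ^ 2 / 2) * (-((x - θ i) / σ))))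
        ((x - θ i) / σ) := (h0.exp).const_mul _
    have h3 := h2.comp x h1
    have : g i = (fun u : ℝ => (Real.sqrt (2 * π))⁻¹ * Real.exp (-u ^ 2 / 2)) ∘
        (fun y : ℝ => (y - θ i) / σ) := by
      funext y; simp [hg, hφ, Function.comp]
    rw [this]
    refine h3.congr_deriv ?_
    simp only [Function.comp]
    have hσ' : σ ≠ 0 := ne_of_gt hσ
    field_simp
  set N' : ℝ → ℝ := fun x => ∑ i, (-((x - θ i) / σ ^ 2) * g i x) * θ i with hN'
  set S' : ℝ → ℝ := fun x => ∑ j, -((x - θ j) / σ ^ 2) * g j x with hS'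
  have hNd : ∀ x, HasDerivAt N (N' x) x := by
    intro x
    exact HasDerivAt.fun_sum fun i _ => (hgd i x).mul_const (θ i)
  have hSd : ∀ x, HasDerivAt S (S' x) x := by
    intro x
    exact HasDerivAt.fun_sum fun i _ => hgd i x
  set D : ℝ → ℝ := fun x => (N' x * S x - N x * S' x) / (S x) ^ 2 with hD
  have hdd : ∀ x, HasDerivAt dstar (D x) x := by
    intro x
    rw [hdN]
    exact (hNd x).div (hSd x) (ne_of_gt (hSpos x))
  have hderiv : ∀ x, deriv dstar x = D x := fun x => (hdd x).deriv
  -- algebra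
  have key : ∀ x, D x = (∑ i, ∑ j, g i x * g j x * (θ i - θ j) ^ 2) / (2 * σ ^ 2 * (S x) ^ 2) := by
    intro x
    have hA : σ ^ 2 * (N' x * S x - N x * S' x) =
        ∑ i, ∑ j, g i x * g j x * (θ i * (θ i - θ j)) := by
      simp only [hN', hS', hS, hN]
      rw [Finset.sum_mul_sum, Finset.sum_mul_sum, ← Finset.sum_sub_distrib, Finset.mul_sum]
      refine Finset.sum_congr rfl fun i _ => ?_
      rw [← Finset.sum_sub_distrib, Finset.mul_sum]
      refine Finset.sum_congr rfl fun j _ => ?_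
      field_simp
      ring
    have hT : 2 * (∑ i, ∑ j, g i x * g j x * (θ i * (θ i - θ j))) =
        ∑ i, ∑ j, g i x * g j x * (θ i - θ j) ^ 2 := by
      have hsw : (∑ i, ∑ j, g i x * g j x * (θ i * (θ i - θ j))) =
          ∑ i, ∑ j, g j x * g i x * (θ j * (θ j - θ i)) := Finset.sum_comm
      rw [two_mul]
      nth_rewrite 2 [hsw]
      rw [← Finset.sum_add_distrib]
      refine Finset.sum_congr rfl fun i _ => ?_
      rw [← Finset.sum_add_distrib]
      refine Finset.sum_congr rfl fun j _ => ?_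
      ring
    have hS2 : (0:ℝ) < (S x) ^ 2 := pow_pos (hSpos x) 2
    have hden : (0:ℝ) < 2 * σ ^ 2 * (S x) ^ 2 := by
      have : (0:ℝ) < 2 * σ ^ 2 := by positivity
      exact mul_pos this hS2
    simp only [hD]
    rw [eq_div_iff (ne_of_gt hden)]
    have hA2 : N' x * S x - N x * S' x =
        (∑ i, ∑ j, g i x * g j x * (θ i * (θ i - θ j))) / σ ^ 2 := by
      rw [eq_div_iff (ne_of_gt hσ2), ← hA]
      ring
    rw [hA2, ← hT]
    have hSx : S x ≠ 0 := ne_of_gt (hSpos x)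
    field_simp
  -- bounds
  have hTnn : ∀ x, 0 ≤ ∑ i, ∑ j, g i x * g j x * (θ i - θ j) ^ 2 := by
    intro x
    refine Finset.sum_nonneg fun i _ => Finset.sum_nonneg fun j _ => ?_
    have := hgpos i x; have := hgpos j x; positivity
  have hrn : 0 ≤ r := by
    rw [hr]
    have h1 : Finset.univ.inf' hne θ ≤ θ ⟨0, hn⟩ := Finset.inf'_le θ (Finset.mem_univ _)
    have h2 : θ ⟨0, hn⟩ ≤ Finset.univ.sup' hne θ := Finset.le_sup' θ (Finset.mem_univ _)
    linarith
  have hTub : ∀ x, (∑ i, ∑ j, g i x * g j x * (θ i - θ j) ^ 2) ≤ r ^ 2 * (S x) ^ 2 := by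
    intro x
    have hsq : ∀ i j : Fin n, (θ i - θ j) ^ 2 ≤ r ^ 2 := by
      intro i j
      have h1 : θ i ≤ Finset.univ.sup' hne θ := Finset.le_sup' θ (Finset.mem_univ i)
      have h2 : Finset.univ.inf' hne θ ≤ θ j := Finset.inf'_le θ (Finset.mem_univ j)
      have h3 : θ j ≤ Finset.univ.sup' hne θ := Finset.le_sup' θ (Finset.mem_univ j)
      have h4 : Finset.univ.inf' hne θ ≤ θ i := Finset.inf'_le θ (Finset.mem_univ i)
      have : -r ≤ θ i - θ j := by rw [hr]; linarith
      have h5 : θ i - θ j ≤ r := by rw [hr]; linarith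
      nlinarith
    calc (∑ i, ∑ j, g i x * g j x * (θ i - θ j) ^ 2)
        ≤ ∑ i, ∑ j, g i x * g j x * r ^ 2 := by
          refine Finset.sum_le_sum fun i _ => Finset.sum_le_sum fun j _ => ?_
          have := (hgpos i x).le; have := (hgpos j x).le
          exact mul_le_mul_of_nonneg_left (hsq i j) (by positivity)
      _ = r ^ 2 * (S x) ^ 2 := by
          have hsq2 : (S x) ^ 2 = ∑ i, ∑ j, g i x * g j x := by
            simp only [hS, sq]
            exact Finset.sum_mul_sum _ _ _ _
          rw [hsq2, Finset.mul_sum]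
          refine Finset.sum_congr rfl fun i _ => ?_
          rw [Finset.mul_sum]
          exact Finset.sum_congr rfl fun j _ => by ring
  have hDnn : ∀ x, 0 ≤ D x := by
    intro x
    rw [key x]
    have hS2 : (0:ℝ) < (S x) ^ 2 := pow_pos (hSpos x) 2
    have hden : (0:ℝ) < 2 * σ ^ 2 * (S x) ^ 2 := by
      have : (0:ℝ) < 2 * σ ^ 2 := by positivity
      exact mul_pos this hS2
    exact div_nonneg (hTnn x) hden.le
  have hDub : ∀ x, D x ≤ (σ ^ 2)⁻¹ * r ^ 2 := by
    intro x
    rw [key x]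
    have hS2 : (0:ℝ) < (S x) ^ 2 := pow_pos (hSpos x) 2
    have hden : (0:ℝ) < 2 * σ ^ 2 * (S x) ^ 2 := by
      have : (0:ℝ) < 2 * σ ^ 2 := by positivity
      exact mul_pos this hS2
    rw [div_le_iff₀ hden]
    have h1 : (σ ^ 2)⁻¹ * σ ^ 2 = 1 := inv_mul_cancel₀ (ne_of_gt hσ2)
    nlinarith [hTub x, hTnn x, mul_nonneg (sq_nonneg r) hS2.le]
  refine ⟨?_, fun x => ⟨by rw [hderiv x]; exact hDnn x, by rw [hderiv x]; exact hDub x⟩⟩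
  have hdiff : Differentiable ℝ dstar := fun x => (hdd x).differentiableAt
  exact monotone_of_deriv_nonneg hdiff (fun x => by rw [hderiv x]; exact hDnn x)
end
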